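/- arXiv:1610.07668 — 3 statements merged into one kernel-verified Lean document; each statement's English description precedes it below -/
import Mathlib

section
/- Let V be a finite abelian group and let σ and τ be automorphisms of V satisfying: σ³ = id, σ(v) ≠ v for every v ≠ 0, and τ ∘ σ = σ² ∘ τ. Then 3 · |{v ∈ V : τ(v) = v}| ≤ |V| + 2. -/
/-!
Let `S` be the set of nonzero fixed points of `τ`. The relation `τσ = σ²τ` shows that `S` and
`σ S` meet only where `σ` has a nonzero fixed point, so they are disjoint; applying `σ` and using
`σ³ = 1`, the three sets `S`, `σ S`, `σ² S` are pairwise disjoint. They have `|S|` elements each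
and avoid `0`, whence `3 |S| + 1 ≤ |V|`, while `|Fix τ| = |S| + 1`.
-/

open Function Set

theorem Set.ncard_add_ncard_add_ncard_lt_card {α : Type*} [Finite α] {s t u : Set α} {a : α}
    (hst : Disjoint s t) (hsu : Disjoint s u) (htu : Disjoint t u) (ha : a ∉ s ∪ t ∪ u) :
    s.ncard + t.ncard + u.ncard < Nat.card α := by
  rw [← ncard_union_eq hst, ← ncard_union_eq (disjoint_union_left.2 ⟨hsu, htu⟩)]
  exact ncard_lt_card (ne_of_mem_of_not_mem' (mem_univ a) ha).symm

theorem disjoint_fixedPoints_diff_zero_image {V : Type*} [Zero V] {σ τ : V → V}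
    (hfix : ∀ v : V, v ≠ 0 → σ v ≠ v) (hcomm : ∀ v, τ (σ v) = σ (σ (τ v))) :
    Disjoint (fixedPoints τ \ {0}) (σ '' (fixedPoints τ \ {0})) := by
  rw [Set.disjoint_right]
  rintro _ ⟨w, ⟨hw, -⟩, rfl⟩ ⟨hσw, hσw0⟩
  apply hfix (σ w) hσw0
  calc σ (σ w) = τ (σ w) := by rw [hcomm, hw.eq]
    _ = σ w := hσw

theorem three_mul_ncard_fixedPoints_diff_zero_lt_card {V : Type*} [AddCommGroup V] [Finite V]
    (σ τ : V ≃+ V) (hσ : ∀ v, σ (σ (σ v)) = v)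
    (hfix : ∀ v : V, v ≠ 0 → σ v ≠ v)
    (hcomm : ∀ v, τ (σ v) = σ (σ (τ v))) :
    3 * (fixedPoints τ \ {0}).ncard < Nat.card V := by
  set S := fixedPoints τ \ {0}
  have h01 : Disjoint S (σ '' S) := disjoint_fixedPoints_diff_zero_image hfix hcomm
  have h12 : Disjoint (σ '' S) (σ '' (σ '' S)) := (disjoint_image_iff σ.injective).2 h01
  have h20 : Disjoint (σ '' (σ '' S)) S := by
    simpa only [image_image, hσ, image_id'] using (disjoint_image_iff σ.injective).2 h12
  have h0 : (0 : V) ∉ S ∪ σ '' S ∪ σ '' (σ '' S) := by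
    simp [S]
  have hsum := ncard_add_ncard_add_ncard_lt_card h01 h20.symm h12 h0
  simp only [ncard_image_of_injective _ σ.injective] at hsum
  omega

/-- Lemma 4.4(ii), abstractly: if `σ` has order dividing 3 with only `0` as fixed
point, and `τσ = σ²τ`, then `3 · |Fix(τ)| ≤ |V| + 2`. -/
theorem three_mul_card_fixed_le {V : Type*} [AddCommGroup V] [Finite V]
    (σ τ : V ≃+ V) (hσ : ∀ v, σ (σ (σ v)) = v)
    (hfix : ∀ v : V, v ≠ 0 → σ v ≠ v)
    (hcomm : ∀ v, τ (σ v) = σ (σ (τ v))) :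
    3 * Nat.card {v : V // τ v = v} ≤ Nat.card V + 2 := by
  have hcard : Nat.card {v : V // τ v = v} = (fixedPoints τ \ {0}).ncard + 1 :=
    (ncard_sdiff_singleton_add_one (s := fixedPoints τ) (map_zero τ)).symm
  have hlt := three_mul_ncard_fixedPoints_diff_zero_lt_card σ τ hσ hfix hcomm
  omega
end

section
/- Let V be an 8-dimensional vector space over the field 𝔽₂ = ℤ/2ℤ (for instance V = (ℤ/2ℤ)^8), and let σ and τ be 𝔽₂-linear automorphisms of V satisfying σ³ = id, σ(v) ≠ v for every v ≠ 0, and τ ∘ σ = σ² ∘ τ. Then every 𝔽₂-linear subspace W of V which is fixed pointwise by τ has dimension at most 6 over 𝔽₂. -/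
/-!
If `w` and `σ w` both lie in a `τ`-fixed subspace `W`, then `σ w = τ (σ w) = σ² (τ w) = σ² w`,
so `w` is fixed by `σ` and hence `w = 0`. Thus `W` and `σ W` are disjoint subspaces of the same
dimension, so `2 dim W ≤ 8`.
-/

open Module

theorem Submodule.disjoint_map_of_comp_eq_sq_comp {R V : Type*} [Semiring R] [AddCommMonoid V]
    [Module R V] {σ τ : V →ₗ[R] V} (hσ : Function.Injective σ)
    (hfix : ∀ v : V, v ≠ 0 → σ v ≠ v) (hcomm : ∀ v, τ (σ v) = σ (σ (τ v)))
    {W : Submodule R V} (hW : ∀ w ∈ W, τ w = w) : Disjoint W (W.map σ) := by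
  rw [Submodule.disjoint_def]
  rintro _ hσw ⟨w, hw, rfl⟩
  have hσσ : σ (σ w) = σ w := calc
    σ (σ w) = σ (σ (τ w)) := by rw [hW w hw]
    _ = τ (σ w) := (hcomm w).symm
    _ = σ w := hW _ hσw
  have hσw_eq : σ w = w := hσ hσσ
  rw [hσw_eq]
  by_contra hne
  exact hfix w hne hσw_eq

theorem Submodule.two_mul_finrank_le_of_disjoint_map {K V : Type*} [DivisionRing K]
    [AddCommGroup V] [Module K V] [FiniteDimensional K V] (f : V ≃ₗ[K] V)
    {W : Submodule K V} (h : Disjoint W (W.map (f : V →ₗ[K] V))) :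
    2 * finrank K W ≤ finrank K V := by
  have := Submodule.finrank_add_finrank_le_of_disjoint h
  rw [LinearEquiv.finrank_map_eq] at this
  omega

theorem tau_fixed_subspace_dim_le_six_general {V : Type*} [AddCommGroup V]
    [Module (ZMod 2) V] (hdim : Module.finrank (ZMod 2) V = 8)
    (σ τ : V ≃ₗ[ZMod 2] V)
    (hfix : ∀ v : V, v ≠ 0 → σ v ≠ v)
    (hcomm : ∀ v, τ (σ v) = σ (σ (τ v)))
    (W : Submodule (ZMod 2) V) (hW : ∀ w ∈ W, τ w = w) :
    Module.finrank (ZMod 2) W ≤ 6 := by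
  have : FiniteDimensional (ZMod 2) V := Module.finite_of_finrank_eq_succ hdim
  have hdisj : Disjoint W (W.map (σ : V →ₗ[ZMod 2] V)) :=
    Submodule.disjoint_map_of_comp_eq_sq_comp (τ := τ) σ.injective hfix hcomm hW
  have := Submodule.two_mul_finrank_le_of_disjoint_map σ hdisj
  omega

/-- Linear-algebraic core of Proposition 4.2: on an 8-dimensional `𝔽₂`-vector
space, if `σ` is a linear automorphism with `σ³ = id` and no nonzero fixed
vector, and `τ` is a linear automorphism with `τ ∘ σ = σ² ∘ τ`, then any
subspace fixed pointwise by `τ` has dimension at most 6. -/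
theorem tau_fixed_subspace_dim_le_six {V : Type*} [AddCommGroup V]
    [Module (ZMod 2) V] (hdim : Module.finrank (ZMod 2) V = 8)
    (σ τ : V ≃ₗ[ZMod 2] V) (hσ : ∀ v, σ (σ (σ v)) = v)
    (hfix : ∀ v : V, v ≠ 0 → σ v ≠ v)
    (hcomm : ∀ v, τ (σ v) = σ (σ (τ v)))
    (W : Submodule (ZMod 2) V) (hW : ∀ w ∈ W, τ w = w) :
    Module.finrank (ZMod 2) W ≤ 6 :=
  tau_fixed_subspace_dim_le_six_general hdim σ τ hfix hcomm W hW
end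

section
/- Let K = ℚ(ζ₃) where ζ₃ is a primitive third root of unity. The eight points of ℙ²(K) with homogeneous coordinates (0:1:0), (0:0:1), (1:1:1), (1:ζ₃:ζ₃²), (1:ζ₃²:ζ₃), (3:4:5), (3:4ζ₃:5ζ₃²), (3:4ζ₃²:5ζ₃) are pairwise distinct, the set of these eight points is mapped to itself by the linear automorphism of ℙ² given by (x:y:z) ↦ (x:ζ₃y:ζ₃²z), and the nontrivial element of Gal(K/ℚ) (determined by ζ₃ ↦ ζ₃²), acting coordinatewise on points, permutes the set with exactly six orbits. -/
/-- The eight points `(0:1:0), (0:0:1), (1:1:1), (1:ζ₃:ζ₃²), (1:ζ₃²:ζ₃), (3:4:5),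
(3:4ζ₃:5ζ₃²), (3:4ζ₃²:5ζ₃)` of `ℙ²(ℚ(ζ₃))` are pairwise distinct, the set of
these points is mapped to itself by the linear automorphism
`(x:y:z) ↦ (x:ζ₃y:ζ₃²z)`, and the nontrivial element of `Gal(ℚ(ζ₃)/ℚ)` (sending
`ζ₃ ↦ ζ₃²`), acting coordinatewise, permutes the set with exactly six orbits. -/
theorem mu3_invariant_points {K : Type*} [Field K] [Algebra ℚ K]
    [IsCyclotomicExtension {3} ℚ K]
    (ζ : K) (hζ : IsPrimitiveRoot ζ 3)
    (τ : K ≃ₐ[ℚ] K) (hτ : τ ζ = ζ ^ 2)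
    (Q : Fin 8 → Fin 3 → K)
    (hQ : Q = ![![0, 1, 0], ![0, 0, 1], ![1, 1, 1], ![1, ζ, ζ ^ 2],
      ![1, ζ ^ 2, ζ], ![3, 4, 5], ![3, 4 * ζ, 5 * ζ ^ 2], ![3, 4 * ζ ^ 2, 5 * ζ]]) :
    -- (1) the eight projective points are pairwise distinct
    (∀ i j : Fin 8, i ≠ j → ¬∃ c : K, c ≠ 0 ∧ Q j = c • Q i) ∧
    -- (2) the set is mapped to itself by `(x:y:z) ↦ (x:ζ₃y:ζ₃²z)`
    (∀ i : Fin 8, ∃ j : Fin 8, ∃ c : K, c ≠ 0 ∧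
      ![Q i 0, ζ * Q i 1, ζ ^ 2 * Q i 2] = c • Q j) ∧
    -- (3) `τ` acting coordinatewise permutes the set ...
    (∀ i : Fin 8, ∃ j : Fin 8, ∃ c : K, c ≠ 0 ∧
      (fun m => τ (Q i m)) = c • Q j) ∧
    -- ... with exactly six orbits
    Set.ncard {S : Set (Fin 8) | ∃ i : Fin 8, S =
      {j | (∃ c : K, c ≠ 0 ∧ Q j = c • Q i) ∨
           (∃ c : K, c ≠ 0 ∧ Q j = c • fun m => τ (Q i m))}} = 6 := by
  haveI : CharZero K := charZero_of_injective_algebraMap (algebraMap ℚ K).injective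
  have hζ3 : ζ ^ 3 = 1 := hζ.pow_eq_one
  have hne1 : ζ ≠ 1 := hζ.ne_one (by norm_num)
  have hζ0 : ζ ≠ 0 := hζ.ne_zero (by norm_num)
  have hsum : ζ ^ 2 + ζ + 1 = 0 := by
    rcases mul_eq_zero.mp (show (ζ - 1) * (ζ ^ 2 + ζ + 1) = 0 by linear_combination hζ3) with h | h
    · exact absurd (sub_eq_zero.mp h) hne1
    · exact h
  have hK : ∀ a b : ℚ, b ≠ 0 → ¬((a : K) + (b : K) * ζ = 0) := by
    intro a b hb h
    have key : ((a ^ 2 - a * b + b ^ 2 : ℚ) : K) = 0 := by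
      push_cast
      linear_combination ((a : K) - (b : K) - (b : K) * ζ) * h + (b : K) ^ 2 * hsum
    have key2 : (a ^ 2 - a * b + b ^ 2 : ℚ) = 0 := by exact_mod_cast key
    have hb2 : 0 < b ^ 2 := by positivity
    nlinarith [sq_nonneg (2 * a - b)]
  -- pairwise distinctness for i < j
  have hND : ∀ i j : Fin 8, i < j → ¬∃ c : K, c ≠ 0 ∧ Q j = c • Q i := by
    intro i j hlt hex
    obtain ⟨c, hc, h⟩ := hex
    rw [hQ] at h
    fin_cases i <;> fin_cases j <;> first | exact absurd hlt (by decide) | skip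
    -- (0,1)
    · exact absurd (congrFun h 2 : (1 : K) = c * 0) (by norm_num : ¬ (1 : K) = c * 0)
    -- (0,2) .. (0,7)
    · exact absurd (congrFun h 0 : (1 : K) = c * 0) (by norm_num)
    · exact absurd (congrFun h 0 : (1 : K) = c * 0) (by norm_num)
    · exact absurd (congrFun h 0 : (1 : K) = c * 0) (by norm_num)
    · exact absurd (congrFun h 0 : (3 : K) = c * 0) (by norm_num)
    · exact absurd (congrFun h 0 : (3 : K) = c * 0) (by norm_num)
    · exact absurd (congrFun h 0 : (3 : K) = c * 0) (by norm_num)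
    -- (1,2) .. (1,7)
    · exact absurd (congrFun h 0 : (1 : K) = c * 0) (by norm_num)
    · exact absurd (congrFun h 0 : (1 : K) = c * 0) (by norm_num)
    · exact absurd (congrFun h 0 : (1 : K) = c * 0) (by norm_num)
    · exact absurd (congrFun h 0 : (3 : K) = c * 0) (by norm_num)
    · exact absurd (congrFun h 0 : (3 : K) = c * 0) (by norm_num)
    · exact absurd (congrFun h 0 : (3 : K) = c * 0) (by norm_num)
    -- (2,3)
    · have e0 : (1 : K) = c * 1 := congrFun h 0
      have e1 : ζ = c * 1 := congrFun h 1
      exact hK (-1) 1 (by norm_num) (by push_cast; linear_combination e1 - e0)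
    -- (2,4)
    · have e0 : (1 : K) = c * 1 := congrFun h 0
      have e1 : ζ ^ 2 = c * 1 := congrFun h 1
      exact hK 2 1 (by norm_num) (by push_cast; linear_combination hsum - e1 + e0)
    -- (2,5)
    · have e0 : (3 : K) = c * 1 := congrFun h 0
      have e1 : (4 : K) = c * 1 := congrFun h 1
      have : (3 : K) = 4 := by linear_combination e0 - e1
      norm_num at this
    -- (2,6)
    · have e0 : (3 : K) = c * 1 := congrFun h 0
      have e1 : (4 * ζ : K) = c * 1 := congrFun h 1
      exact hK (-3) 4 (by norm_num) (by push_cast; linear_combination e1 - e0)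
    -- (2,7)
    · have e0 : (3 : K) = c * 1 := congrFun h 0
      have e2 : (5 * ζ : K) = c * 1 := congrFun h 2
      exact hK (-3) 5 (by norm_num) (by push_cast; linear_combination e2 - e0)
    -- (3,4)
    · have e0 : (1 : K) = c * 1 := congrFun h 0
      have e1 : ζ ^ 2 = c * ζ := congrFun h 1
      exact hK 1 2 (by norm_num) (by push_cast; linear_combination hsum - e1 + ζ * e0)
    -- (3,5)
    · have e0 : (3 : K) = c * 1 := congrFun h 0
      have e1 : (4 : K) = c * ζ := congrFun h 1
      exact hK 4 (-3) (by norm_num) (by push_cast; linear_combination e1 - ζ * e0)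
    -- (3,6)
    · have e0 : (3 : K) = c * 1 := congrFun h 0
      have e1 : (4 * ζ : K) = c * ζ := congrFun h 1
      exact hK 0 1 (by norm_num) (by push_cast; linear_combination e1 - ζ * e0)
    -- (3,7)
    · have e0 : (3 : K) = c * 1 := congrFun h 0
      have e2 : (5 * ζ : K) = c * ζ ^ 2 := congrFun h 2
      exact hK 3 8 (by norm_num) (by push_cast; linear_combination e2 - ζ ^ 2 * e0 + 3 * hsum)
    -- (4,5)
    · have e0 : (3 : K) = c * 1 := congrFun h 0
      have e1 : (4 : K) = c * ζ ^ 2 := congrFun h 1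
      exact hK 7 3 (by norm_num) (by push_cast; linear_combination e1 - ζ ^ 2 * e0 + 3 * hsum)
    -- (4,6)
    · have e0 : (3 : K) = c * 1 := congrFun h 0
      have e1 : (4 * ζ : K) = c * ζ ^ 2 := congrFun h 1
      exact hK 3 7 (by norm_num) (by push_cast; linear_combination e1 - ζ ^ 2 * e0 + 3 * hsum)
    -- (4,7)
    · have e0 : (3 : K) = c * 1 := congrFun h 0
      have e1 : (4 * ζ ^ 2 : K) = c * ζ ^ 2 := congrFun h 1
      exact hK 1 1 (by norm_num) (by push_cast; linear_combination hsum - e1 + ζ ^ 2 * e0)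
    -- (5,6)
    · have e0 : (3 : K) = c * 3 := congrFun h 0
      have e1 : (4 * ζ : K) = c * 4 := congrFun h 1
      exact hK (-1) 1 (by norm_num)
        (by push_cast; linear_combination (1/4) * e1 - (1/3) * e0)
    -- (5,7)
    · have e0 : (3 : K) = c * 3 := congrFun h 0
      have e1 : (4 * ζ ^ 2 : K) = c * 4 := congrFun h 1
      exact hK 2 1 (by norm_num)
        (by push_cast; linear_combination hsum - (1/4) * e1 + (1/3) * e0)
    -- (6,7)
    · have e0 : (3 : K) = c * 3 := congrFun h 0
      have e1 : (4 * ζ ^ 2 : K) = c * (4 * ζ) := congrFun h 1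
      exact hK 1 2 (by norm_num)
        (by push_cast; linear_combination hsum - (1/4) * e1 + (ζ/3) * e0)
  -- scalar-equivalence is equality of indices
  have hEQ : ∀ i j : Fin 8, (∃ c : K, c ≠ 0 ∧ Q j = c • Q i) ↔ j = i := by
    intro i j
    constructor
    · rintro ⟨c, hc, h⟩
      by_contra hne
      rcases (Ne.lt_or_gt hne) with hlt | hlt
      · exact hND j i hlt ⟨c⁻¹, inv_ne_zero hc,
          by rw [h, smul_smul, inv_mul_cancel₀ hc, one_smul]⟩
      · exact hND i j hlt ⟨c, hc, h⟩
    · rintro rfl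
      exact ⟨1, one_ne_zero, (one_smul K _).symm⟩
  -- action of τ on the rows
  have t0 : (fun m => τ ((![0, 1, 0] : Fin 3 → K) m)) = (![0, 1, 0] : Fin 3 → K) := by
    funext m; fin_cases m
    · exact map_zero τ
    · exact map_one τ
    · exact map_zero τ
  have t1 : (fun m => τ ((![0, 0, 1] : Fin 3 → K) m)) = (![0, 0, 1] : Fin 3 → K) := by
    funext m; fin_cases m
    · exact map_zero τ
    · exact map_zero τ
    · exact map_one τ
  have t2 : (fun m => τ ((![1, 1, 1] : Fin 3 → K) m)) = (![1, 1, 1] : Fin 3 → K) := by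
    funext m; fin_cases m <;> exact map_one τ
  have t3 : (fun m => τ ((![1, ζ, ζ ^ 2] : Fin 3 → K) m)) = (![1, ζ ^ 2, ζ] : Fin 3 → K) := by
    funext m; fin_cases m
    · exact map_one τ
    · exact hτ
    · show τ (ζ ^ 2) = ζ
      rw [map_pow, hτ]; linear_combination ζ * hζ3
  have t4 : (fun m => τ ((![1, ζ ^ 2, ζ] : Fin 3 → K) m)) = (![1, ζ, ζ ^ 2] : Fin 3 → K) := by
    funext m; fin_cases m
    · exact map_one τ
    · show τ (ζ ^ 2) = ζ
      rw [map_pow, hτ]; linear_combination ζ * hζ3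
    · exact hτ
  have t5 : (fun m => τ ((![3, 4, 5] : Fin 3 → K) m)) = (![3, 4, 5] : Fin 3 → K) := by
    funext m; fin_cases m
    · exact map_ofNat τ 3
    · exact map_ofNat τ 4
    · exact map_ofNat τ 5
  have t6 : (fun m => τ ((![3, 4 * ζ, 5 * ζ ^ 2] : Fin 3 → K) m))
      = (![3, 4 * ζ ^ 2, 5 * ζ] : Fin 3 → K) := by
    funext m; fin_cases m
    · exact map_ofNat τ 3
    · show τ (4 * ζ) = 4 * ζ ^ 2
      rw [map_mul, hτ, map_ofNat]
    · show τ (5 * ζ ^ 2) = 5 * ζ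
      rw [map_mul, map_pow, hτ, map_ofNat]; linear_combination 5 * ζ * hζ3
  have t7 : (fun m => τ ((![3, 4 * ζ ^ 2, 5 * ζ] : Fin 3 → K) m))
      = (![3, 4 * ζ, 5 * ζ ^ 2] : Fin 3 → K) := by
    funext m; fin_cases m
    · exact map_ofNat τ 3
    · show τ (4 * ζ ^ 2) = 4 * ζ
      rw [map_mul, map_pow, hτ, map_ofNat]; linear_combination 4 * ζ * hζ3
    · show τ (5 * ζ) = 5 * ζ ^ 2
      rw [map_mul, hτ, map_ofNat]
  have hτQ : ∀ i : Fin 8, (fun m => τ (Q i m)) = Q (![0, 1, 2, 4, 3, 5, 7, 6] i) := by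
    intro i
    simp only [hQ]
    fin_cases i
    exacts [t0, t1, t2, t3, t4, t5, t6, t7]
  refine ⟨?_, ?_, ?_, ?_⟩
  -- (1)
  · intro i j hij hex
    exact hij ((hEQ i j).mp hex).symm
  -- (2)
  · intro i
    simp only [hQ]
    fin_cases i
    · refine ⟨0, ζ, hζ0, funext fun m => ?_⟩
      fin_cases m
      · show (0 : K) = ζ * 0; ring
      · show ζ * 1 = ζ * 1; ring
      · show ζ ^ 2 * 0 = ζ * 0; ring
    · refine ⟨1, ζ ^ 2, pow_ne_zero 2 hζ0, funext fun m => ?_⟩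
      fin_cases m
      · show (0 : K) = ζ ^ 2 * 0; ring
      · show ζ * 0 = ζ ^ 2 * 0; ring
      · show ζ ^ 2 * 1 = ζ ^ 2 * 1; ring
    · refine ⟨3, 1, one_ne_zero, funext fun m => ?_⟩
      fin_cases m
      · show (1 : K) = 1 * 1; ring
      · show ζ * 1 = 1 * ζ; ring
      · show ζ ^ 2 * 1 = 1 * ζ ^ 2; ring
    · refine ⟨4, 1, one_ne_zero, funext fun m => ?_⟩
      fin_cases m
      · show (1 : K) = 1 * 1; ring
      · show ζ * ζ = 1 * ζ ^ 2; ring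
      · show ζ ^ 2 * ζ ^ 2 = 1 * ζ; linear_combination ζ * hζ3
    · refine ⟨2, 1, one_ne_zero, funext fun m => ?_⟩
      fin_cases m
      · show (1 : K) = 1 * 1; ring
      · show ζ * ζ ^ 2 = 1 * 1; linear_combination hζ3
      · show ζ ^ 2 * ζ = 1 * 1; linear_combination hζ3
    · refine ⟨6, 1, one_ne_zero, funext fun m => ?_⟩
      fin_cases m
      · show (3 : K) = 1 * 3; ring
      · show ζ * 4 = 1 * (4 * ζ); ring
      · show ζ ^ 2 * 5 = 1 * (5 * ζ ^ 2); ring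
    · refine ⟨7, 1, one_ne_zero, funext fun m => ?_⟩
      fin_cases m
      · show (3 : K) = 1 * 3; ring
      · show ζ * (4 * ζ) = 1 * (4 * ζ ^ 2); ring
      · show ζ ^ 2 * (5 * ζ ^ 2) = 1 * (5 * ζ); linear_combination 5 * ζ * hζ3
    · refine ⟨5, 1, one_ne_zero, funext fun m => ?_⟩
      fin_cases m
      · show (3 : K) = 1 * 3; ring
      · show ζ * (4 * ζ ^ 2) = 1 * 4; linear_combination 4 * hζ3
      · show ζ ^ 2 * (5 * ζ) = 1 * 5; linear_combination 5 * hζ3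
  -- (3) first part
  · intro i
    exact ⟨![0, 1, 2, 4, 3, 5, 7, 6] i, 1, one_ne_zero, by rw [hτQ i, one_smul]⟩
  -- (3) orbit count
  · simp only [hτQ, hEQ]
    have hset : {S : Set (Fin 8) | ∃ i : Fin 8, S =
        {j | j = i ∨ j = ![0, 1, 2, 4, 3, 5, 7, 6] i}}
        = ({{0}, {1}, {2}, {3, 4}, {5}, {6, 7}} : Set (Set (Fin 8))) := by
      ext S
      simp only [Set.mem_setOf_eq, Set.mem_insert_iff, Set.mem_singleton_iff]
      constructor
      · rintro ⟨i, rfl⟩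
        fin_cases i
        · exact Or.inl (Set.ext fun j => by show j = 0 ∨ j = 0 ↔ j = 0; exact or_self_iff)
        · exact Or.inr (Or.inl (Set.ext fun j => by
            show j = 1 ∨ j = 1 ↔ j = 1; exact or_self_iff))
        · exact Or.inr (Or.inr (Or.inl (Set.ext fun j => by
            show j = 2 ∨ j = 2 ↔ j = 2; exact or_self_iff)))
        · exact Or.inr (Or.inr (Or.inr (Or.inl (Set.ext fun j => by
            show j = 3 ∨ j = 4 ↔ j = 3 ∨ j = 4; exact Iff.rfl))))
        · exact Or.inr (Or.inr (Or.inr (Or.inl (Set.ext fun j => by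
            show j = 4 ∨ j = 3 ↔ j = 3 ∨ j = 4; exact or_comm))))
        · exact Or.inr (Or.inr (Or.inr (Or.inr (Or.inl (Set.ext fun j => by
            show j = 5 ∨ j = 5 ↔ j = 5; exact or_self_iff)))))
        · exact Or.inr (Or.inr (Or.inr (Or.inr (Or.inr (Set.ext fun j => by
            show j = 6 ∨ j = 7 ↔ j = 6 ∨ j = 7; exact Iff.rfl)))))
        · exact Or.inr (Or.inr (Or.inr (Or.inr (Or.inr (Set.ext fun j => by
            show j = 7 ∨ j = 6 ↔ j = 6 ∨ j = 7; exact or_comm)))))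
      · rintro (rfl | rfl | rfl | rfl | rfl | rfl)
        · exact ⟨0, Set.ext fun j => by show j = 0 ↔ j = 0 ∨ j = 0; exact or_self_iff.symm⟩
        · exact ⟨1, Set.ext fun j => by show j = 1 ↔ j = 1 ∨ j = 1; exact or_self_iff.symm⟩
        · exact ⟨2, Set.ext fun j => by show j = 2 ↔ j = 2 ∨ j = 2; exact or_self_iff.symm⟩
        · exact ⟨3, Set.ext fun j => by show j = 3 ∨ j = 4 ↔ j = 3 ∨ j = 4; exact Iff.rfl⟩
        · exact ⟨5, Set.ext fun j => by show j = 5 ↔ j = 5 ∨ j = 5; exact or_self_iff.symm⟩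
        · exact ⟨6, Set.ext fun j => by show j = 6 ∨ j = 7 ↔ j = 6 ∨ j = 7; exact Iff.rfl⟩
    rw [hset]
    have hAB : ∀ (A B : Set (Fin 8)) (x : Fin 8), x ∈ A → x ∉ B → A ≠ B :=
      fun A B x hx hx' h => hx' (h ▸ hx)
    have hn1 : ({0} : Set (Fin 8)) ∉ ({{1}, {2}, {3, 4}, {5}, {6, 7}} : Set (Set (Fin 8))) := by
      simp only [Set.mem_insert_iff, Set.mem_singleton_iff, not_or]
      exact ⟨hAB _ _ 0 rfl (by simp), hAB _ _ 0 rfl (by simp), hAB _ _ 0 rfl (by simp),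
        hAB _ _ 0 rfl (by simp), hAB _ _ 0 rfl (by simp)⟩
    have hn2 : ({1} : Set (Fin 8)) ∉ ({{2}, {3, 4}, {5}, {6, 7}} : Set (Set (Fin 8))) := by
      simp only [Set.mem_insert_iff, Set.mem_singleton_iff, not_or]
      exact ⟨hAB _ _ 1 rfl (by simp), hAB _ _ 1 rfl (by simp), hAB _ _ 1 rfl (by simp),
        hAB _ _ 1 rfl (by simp)⟩
    have hn3 : ({2} : Set (Fin 8)) ∉ ({{3, 4}, {5}, {6, 7}} : Set (Set (Fin 8))) := by
      simp only [Set.mem_insert_iff, Set.mem_singleton_iff, not_or]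
      exact ⟨hAB _ _ 2 rfl (by simp), hAB _ _ 2 rfl (by simp), hAB _ _ 2 rfl (by simp)⟩
    have hn4 : ({3, 4} : Set (Fin 8)) ∉ ({{5}, {6, 7}} : Set (Set (Fin 8))) := by
      simp only [Set.mem_insert_iff, Set.mem_singleton_iff, not_or]
      exact ⟨hAB _ _ 3 (Set.mem_insert _ _) (by simp), hAB _ _ 3 (Set.mem_insert _ _) (by simp)⟩
    have hn5 : ({5} : Set (Fin 8)) ∉ ({{6, 7}} : Set (Set (Fin 8))) := by
      simp only [Set.mem_singleton_iff]
      exact hAB _ _ 5 rfl (by simp)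
    rw [Set.ncard_insert_of_notMem hn1 (Set.toFinite _),
      Set.ncard_insert_of_notMem hn2 (Set.toFinite _),
      Set.ncard_insert_of_notMem hn3 (Set.toFinite _),
      Set.ncard_insert_of_notMem hn4 (Set.toFinite _),
      Set.ncard_insert_of_notMem hn5 (Set.toFinite _),
      Set.ncard_singleton]
end
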